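/- For every graph G, the treespan of G is at least max(tw(G), Δ(G)/2), where tw is treewidth and Δ is maximum degree. -/

import Mathlib

open SimpleGraph

/-- `x` is a (reflexive) ancestor of `y` in the tree `T` rooted at `r`,
expressed metrically: `x` lies on the unique `r`–`y` path. -/
def AncIn {V : Type*} (T : SimpleGraph V) (r x y : V) : Prop :=
  T.dist r x + T.dist x y = T.dist r y

/-- A tree-layout of `G`: a rooted tree on the vertex set of `G` such that the endpoints
of every edge of `G` are in ancestor-descendant relation. -/
structure TreeLayout {V : Type*} (G : SimpleGraph V) where
  tree : SimpleGraph V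
  isTree : tree.IsTree
  root : V
  layout : ∀ ⦃x y : V⦄, G.Adj x y → AncIn tree root x y ∨ AncIn tree root y x

namespace TreeLayout

variable {V : Type*} {G : SimpleGraph V}

/-- `x` is an ancestor of `y` (reflexively) in the tree-layout. -/
def Anc (L : TreeLayout G) (x y : V) : Prop := AncIn L.tree L.root x y

def StrictAnc (L : TreeLayout G) (x y : V) : Prop := L.Anc x y ∧ x ≠ y

/-- The bandwidth of the tree-layout is at most `k`: neighbours in `G` are at
tree-distance at most `k`. -/
def BandwidthLE (L : TreeLayout G) (k : ℕ) : Prop :=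
  ∀ ⦃x y : V⦄, G.Adj x y → L.tree.dist x y ≤ k

/-- The interval `[a,b]` of the tree-layout: vertices on the tree path from `a` to `b`
(for `a` an ancestor of `b`). -/
def interval (L : TreeLayout G) (a b : V) : Set V := {z : V | L.Anc a z ∧ L.Anc z b}

end TreeLayout

/-- Treebandwidth: the minimum bandwidth over tree-layouts of `G`. -/
noncomputable def treebandwidth {V : Type*} (G : SimpleGraph V) : ℕ :=
  sInf {k | ∃ L : TreeLayout G, L.BandwidthLE k}

/-- Treedepth: the minimum depth (number of vertices on a root-to-leaf path) of a
tree-layout (elimination tree) of `G`. -/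
noncomputable def treedepth {V : Type*} (G : SimpleGraph V) : ℕ :=
  sInf {k | ∃ L : TreeLayout G, ∀ v : V, L.tree.dist L.root v + 1 ≤ k}

/-- A tree-partition of `G`: a partition of `V(G)` indexed by the nodes of a tree such that
every edge of `G` has both ends in one part or in parts indexed by adjacent nodes. -/
structure TreePartition {V : Type*} (G : SimpleGraph V) where
  ι : Type
  tree : SimpleGraph ι
  isTree : tree.IsTree
  part : V → ι
  adj : ∀ ⦃x y : V⦄, G.Adj x y → part x = part y ∨ tree.Adj (part x) (part y)

/-- Tree-partition-width: minimum over tree-partitions of the maximum part size. -/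
noncomputable def treePartitionWidth {V : Type*} (G : SimpleGraph V) : ℕ :=
  sInf {k | ∃ P : TreePartition G, ∀ i : P.ι, {v : V | P.part v = i}.ncard ≤ k}

/-- The connected component of `v` in the subgraph of `G` induced by `S`. -/
def connCompIn {V : Type*} (G : SimpleGraph V) (S : Set V) (v : V) : Set V :=
  {w : V | ∃ (hv : v ∈ S) (hw : w ∈ S), (G.induce S).Reachable ⟨v, hv⟩ ⟨w, hw⟩}

/-- `RootedTreedepthLE G U S n` expresses `td(G[S], U) ≤ n` for the rooted treedepth:
it is `0` when `S` misses `U`, and otherwise one may delete one vertex from each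
connected component and recurse. -/
inductive RootedTreedepthLE {V : Type*} (G : SimpleGraph V) (U : Set V) : Set V → ℕ → Prop
  | base (S : Set V) (n : ℕ) (h : S ∩ U = ∅) : RootedTreedepthLE G U S n
  | step (S : Set V) (n : ℕ) (pick : ∀ v : V, v ∈ S → V)
      (hpick : ∀ (v : V) (hv : v ∈ S), pick v hv ∈ connCompIn G S v)
      (h : ∀ (v : V) (hv : v ∈ S),
        RootedTreedepthLE G U (connCompIn G S v \ {pick v hv}) n) :
      RootedTreedepthLE G U S (n + 1)

/-- A `U`-rooted minor model of the path on `k` vertices in `G`. -/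
structure RootedPathMinor {V : Type*} (G : SimpleGraph V) (U : Set V) (k : ℕ) where
  branch : Fin k → Set V
  connected : ∀ i, (G.induce (branch i)).Connected
  disjoint : ∀ i j, i ≠ j → Disjoint (branch i) (branch j)
  rooted : ∀ i, (branch i ∩ U).Nonempty
  adj : ∀ i j : Fin k, (j : ℕ) = (i : ℕ) + 1 → ∃ a ∈ branch i, ∃ b ∈ branch j, G.Adj a b

/-- A subdivision of the `k`-fan in `G` with universal (center) vertex `v`:
branch vertices `b 0, …, b (k-1)` of the path, internally disjoint spokes from `v`
and internally disjoint path segments between consecutive branch vertices. -/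
structure FanSubdivision {V : Type*} (G : SimpleGraph V) (v : V) (k : ℕ) where
  b : Fin k → V
  binj : Function.Injective b
  bne : ∀ i, b i ≠ v
  spoke : ∀ i : Fin k, G.Walk v (b i)
  spokePath : ∀ i, (spoke i).IsPath
  seg : ∀ (i : Fin k) (h : (i : ℕ) + 1 < k), G.Walk (b i) (b ⟨(i : ℕ) + 1, h⟩)
  segPath : ∀ i h, (seg i h).IsPath
  vNotinSeg : ∀ i h, v ∉ (seg i h).support
  spokeDisj : ∀ i j, i ≠ j →
    {x | x ∈ (spoke i).support} ∩ {x | x ∈ (spoke j).support} = {v}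
  spokeSegDisj : ∀ i j h,
    {x | x ∈ (spoke i).support} ∩ {x | x ∈ (seg j h).support} ⊆
      ({b i} : Set V) ∩ {b j, b ⟨(j : ℕ) + 1, h⟩}
  segDisj : ∀ i j hi hj, i ≠ j →
    {x | x ∈ (seg i hi).support} ∩ {x | x ∈ (seg j hj).support} ⊆
      ({b i, b ⟨(i : ℕ) + 1, hi⟩} : Set V) ∩ {b j, b ⟨(j : ℕ) + 1, hj⟩}

/-- A `p`-centered colouring: every (nonempty) connected induced subgraph either receives
more than `p` colours or has a uniquely coloured vertex. -/
def IsPCenteredColoring {V : Type*} (G : SimpleGraph V) (p : ℕ) (c : V → ℕ) : Prop :=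
  ∀ S : Set V, S.Nonempty → (G.induce S).Connected →
    p < (c '' S).ncard ∨ ∃ x ∈ S, ∀ y ∈ S, c y = c x → y = x

/-- Treewidth, characterised via tree-layouts: the minimum over tree-layouts of the maximum
over nodes `u` of the number of strict ancestors of `u` that are `G`-neighbours of some
descendant of `u` (including `u`). -/
noncomputable def treewidthTL {V : Type*} (G : SimpleGraph V) : ℕ :=
  sInf {k | ∃ L : TreeLayout G, ∀ u : V,
    {a : V | L.StrictAnc a u ∧ ∃ d : V, L.Anc u d ∧ G.Adj a d}.ncard ≤ k}

/-- The pruned subtree of `x` in a tree-layout: descendants of `x` (including `x`) having a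
neighbour of `x` among their own descendants. -/
def prunedSubtree {V : Type*} {G : SimpleGraph V} (L : TreeLayout G) (x : V) : Set V :=
  {y : V | L.Anc x y ∧ ∃ d : V, L.Anc y d ∧ G.Adj x d}

/-- Treespan: the minimum over tree-layouts of (maximum size of a pruned subtree minus one). -/
noncomputable def treespan {V : Type*} (G : SimpleGraph V) : ℕ :=
  sInf {k | ∃ L : TreeLayout G, ∀ x : V, (prunedSubtree L x).ncard ≤ k + 1}

/-- A tree decomposition of `G`. -/
structure TreeDecomp {V : Type*} (G : SimpleGraph V) where
  ι : Type
  tree : SimpleGraph ι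
  isTree : tree.IsTree
  bag : ι → Set V
  coverV : ∀ v : V, ∃ t, v ∈ bag t
  coverE : ∀ ⦃x y : V⦄, G.Adj x y → ∃ t, x ∈ bag t ∧ y ∈ bag t
  subtree : ∀ v : V, (tree.induce {t : ι | v ∈ bag t}).Connected

/-- Domino treewidth: minimum width over tree decompositions in which every vertex
belongs to at most two bags. -/
noncomputable def dominoTreewidth {V : Type*} (G : SimpleGraph V) : ℕ :=
  sInf {k | ∃ D : TreeDecomp G, (∀ v : V, {t : D.ι | v ∈ D.bag t}.ncard ≤ 2) ∧
    ∀ t : D.ι, (D.bag t).ncard ≤ k + 1}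

/-- Edge-treewidth via tree-layouts: the minimum over tree-layouts of the maximum over nodes
`u` of the number of edges with one endpoint a descendant of `u` (including `u`) and the other
a strict ancestor of `u`. -/
noncomputable def edgeTreewidth {V : Type*} (G : SimpleGraph V) : ℕ :=
  sInf {k | ∃ L : TreeLayout G, ∀ u : V,
    {p : V × V | L.StrictAnc p.1 u ∧ L.Anc u p.2 ∧ G.Adj p.1 p.2}.ncard ≤ k}

/-- `S` is a block (2-connected component) of `G`: a maximal connected set of vertices whose
induced subgraph has no cutvertex. -/
def IsBlock {V : Type*} (G : SimpleGraph V) (S : Set V) : Prop :=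
  S.Nonempty ∧ (G.induce S).Connected ∧
    (∀ x ∈ S, (G.induce (S \ {x})).Preconnected) ∧
    ∀ S' : Set V, S ⊆ S' → (G.induce S').Connected →
      (∀ x ∈ S', (G.induce (S' \ {x})).Preconnected) → S' = S

/-- Biconnected maximum degree: the maximum over blocks of `G` of the maximum degree
inside the block. -/
noncomputable def biconnMaxDegree {V : Type*} (G : SimpleGraph V) : ℕ :=
  sSup {d | ∃ (S : Set V) (v : V), IsBlock G S ∧ v ∈ S ∧ d = {w ∈ S | G.Adj v w}.ncard}

/-- `G` is 3-connected: more than 3 vertices, and removing any two vertices leaves it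
connected. -/
def ThreeConnected {V : Type*} (G : SimpleGraph V) : Prop :=
  3 < Nat.card V ∧ ∀ x y : V, (G.induce {v : V | v ≠ x ∧ v ≠ y}).Connected

/-- `G` has `H` as a minor (branch-set model). -/
def HasMinor {V W : Type*} (G : SimpleGraph V) (H : SimpleGraph W) : Prop :=
  ∃ B : W → Set V, (∀ w, (G.induce (B w)).Connected) ∧
    (∀ w w', w ≠ w' → Disjoint (B w) (B w')) ∧
    ∀ ⦃w w'⦄, H.Adj w w' → ∃ a ∈ B w, ∃ b ∈ B w', G.Adj a b

/-- Planarity via Wagner's theorem: no `K₅` minor and no `K₃,₃` minor. -/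
def PlanarWagner {V : Type*} (G : SimpleGraph V) : Prop :=
  ¬ HasMinor G (completeGraph (Fin 5)) ∧
    ¬ HasMinor G (completeBipartiteGraph (Fin 3) (Fin 3))

/-- A subdivision of the `k`-wheel in `G` with hub `v`. -/
structure WheelSubdivision {V : Type*} (G : SimpleGraph V) (v : V) (k : ℕ) where
  b : Fin k → V
  binj : Function.Injective b
  bne : ∀ i, b i ≠ v
  spoke : ∀ i : Fin k, G.Walk v (b i)
  spokePath : ∀ i, (spoke i).IsPath
  seg : ∀ i : Fin k, G.Walk (b i) (b (finRotate k i))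
  segPath : ∀ i, (seg i).IsPath
  vNotinSeg : ∀ i, v ∉ (seg i).support
  spokeDisj : ∀ i j, i ≠ j →
    {x | x ∈ (spoke i).support} ∩ {x | x ∈ (spoke j).support} = {v}
  spokeSegDisj : ∀ i j,
    {x | x ∈ (spoke i).support} ∩ {x | x ∈ (seg j).support} ⊆
      ({b i} : Set V) ∩ {b j, b (finRotate k j)}
  segDisj : ∀ i j, i ≠ j →
    {x | x ∈ (seg i).support} ∩ {x | x ∈ (seg j).support} ⊆
      ({b i, b (finRotate k i)} : Set V) ∩ {b j, b (finRotate k j)}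

/-- A subdivision of the `k`-dipole with poles `u`, `v`: `k` internally vertex-disjoint
`u`–`v` paths of length at least `2`. -/
structure DipoleSubdivision {V : Type*} (G : SimpleGraph V) (u v : V) (k : ℕ) where
  path : Fin k → G.Walk u v
  isPath : ∀ i, (path i).IsPath
  len : ∀ i, 2 ≤ (path i).length
  disj : ∀ i j, i ≠ j →
    {x | x ∈ (path i).support} ∩ {x | x ∈ (path j).support} = ({u, v} : Set V)

/-- A separation of `G`. -/
def IsSeparation {V : Type*} (G : SimpleGraph V) (A B : Set V) : Prop :=
  A ∪ B = Set.univ ∧ ∀ a ∈ A \ B, ∀ b ∈ B \ A, ¬ G.Adj a b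

/-- `μ(X,Y)`: the minimum order of a separation `(A,B)` with `X ⊆ A` and `Y ⊆ B`. -/
noncomputable def muSep {V : Type*} (G : SimpleGraph V) (X Y : Set V) : ℕ :=
  sInf {n | ∃ A B : Set V, IsSeparation G A B ∧ X ⊆ A ∧ Y ⊆ B ∧ (A ∩ B).ncard = n}

def IsMaximalClique {V : Type*} (G : SimpleGraph V) (K : Set V) : Prop :=
  G.IsClique K ∧ ∀ K' : Set V, G.IsClique K' → K ⊆ K' → K' = K

/-- `G` is proper chordal: it has a tree-layout in which every maximal clique is an
interval of a root-to-leaf path. -/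
def ProperChordal {V : Type*} (G : SimpleGraph V) : Prop :=
  ∃ L : TreeLayout G, ∀ K : Set V, IsMaximalClique G K →
    ∃ a b : V, L.Anc a b ∧ K = L.interval a b

/-- A topological-minor model (subdivision embedding) of `H` in `G`. -/
structure TopMinorEmbedding {W V : Type*} (H : SimpleGraph W) (G : SimpleGraph V) where
  φ : W → V
  inj : Function.Injective φ
  path : ∀ ⦃a b : W⦄, H.Adj a b → G.Walk (φ a) (φ b)
  isPath : ∀ ⦃a b : W⦄ (h : H.Adj a b), (path h).IsPath
  branchOnPath : ∀ ⦃a b : W⦄ (h : H.Adj a b) (w : W),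
    φ w ∈ (path h).support → w = a ∨ w = b
  disj : ∀ ⦃a b c d : W⦄ (hab : H.Adj a b) (hcd : H.Adj c d), s(a, b) ≠ s(c, d) →
    {x | x ∈ (path hab).support} ∩ {x | x ∈ (path hcd).support} ⊆
      ({φ a, φ b} : Set V) ∩ {φ c, φ d}

/-- A subdivision of the star `K_{1,s}` in `H` with all leaves in `X`. -/
structure StarSubdivision {V : Type*} (H : SimpleGraph V) (X : Set V) (s : ℕ) where
  center : V
  leaf : Fin s → V
  leafInj : Function.Injective leaf
  leafX : ∀ i, leaf i ∈ X
  leafNe : ∀ i, leaf i ≠ center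
  path : ∀ i : Fin s, H.Walk center (leaf i)
  isPath : ∀ i, (path i).IsPath
  disj : ∀ i j, i ≠ j →
    {x | x ∈ (path i).support} ∩ {x | x ∈ (path j).support} = {center}

/-- The weight `w(t,U)` of a set `U` at a node `t` of a tree decomposition is at most `a`:
`|β(t) ∩ U|` plus the number of a suitable family of adhesions incident to `t` whose union
hits all paths from `β(t)` to `U ∖ β(t)` is at most `a`. -/
def WeightLE {V : Type*} {G : SimpleGraph V} (D : TreeDecomp G) (U : Set V) (t : D.ι)
    (a : ℕ) : Prop :=
  ∃ F : Set D.ι, (∀ s ∈ F, D.tree.Adj t s) ∧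
    (D.bag t ∩ U).ncard + F.ncard ≤ a ∧
    ∀ ⦃x y : V⦄ (p : G.Walk x y), x ∈ D.bag t → y ∈ U \ D.bag t →
      ∃ z ∈ p.support, ∃ s ∈ F, z ∈ D.bag t ∩ D.bag s

/-- The graph obtained from `G` by subdividing the edge `xy` into a path with `n + 1`
new internal vertices. -/
def subdivideEdge {V : Type*} (G : SimpleGraph V) (x y : V) (n : ℕ) :
    SimpleGraph (V ⊕ Fin (n + 1)) :=
  SimpleGraph.fromRel (fun a b =>
    (∃ u w : V, a = Sum.inl u ∧ b = Sum.inl w ∧ G.Adj u w ∧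
      ¬(u = x ∧ w = y) ∧ ¬(u = y ∧ w = x)) ∨
    (a = Sum.inl x ∧ b = Sum.inr 0) ∨
    (∃ i : Fin n, a = Sum.inr i.castSucc ∧ b = Sum.inr i.succ) ∨
    (a = Sum.inr (Fin.last n) ∧ b = Sum.inl y))

/-!
Fix a tree-layout whose pruned subtrees have at most `k + 1` vertices. The strict ancestors of
a node `u` that are adjacent to a descendant of `u` form a chain; together with `u` they all lie
in the pruned subtree of the topmost one, so there are at most `k` of them. This bounds the
treewidth by `k`, and also the number of neighbours of a vertex `v` above `v`; the neighbours
below `v` lie in the pruned subtree of `v` and differ from `v`, so `deg v ≤ 2k`.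

Since `treespan` is an infimum over tree-layouts, the bounds need some tree-layout to exist:
every nonempty finite vertex set carries a rooted tree in which any two vertices are comparable.
-/

section TreeLayoutBounds

variable {V : Type*}

section AncIn

variable {T : SimpleGraph V} {r x y z : V}

theorem ancIn_refl (T : SimpleGraph V) (r x : V) : AncIn T r x x := by
  simp [AncIn]

theorem AncIn.trans (hT : T.Connected) (hxy : AncIn T r x y) (hyz : AncIn T r y z) :
    AncIn T r x z := by
  have h₁ : T.dist x z ≤ T.dist x y + T.dist y z := hT.dist_triangle
  have h₂ : T.dist r z ≤ T.dist r x + T.dist x z := hT.dist_triangle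
  unfold AncIn at *
  omega

theorem ancIn_of_mem_support {p : T.Walk r y} (hp : p.length = T.dist r y)
    (hx : x ∈ p.support) : AncIn T r x y := by
  classical
  have h₁ := length_eq_dist_of_subwalk hp (p.isSubwalk_takeUntil hx)
  have h₂ := length_eq_dist_of_subwalk hp (p.isSubwalk_dropUntil hx)
  have h₃ := congrArg Walk.length (p.take_spec hx)
  rw [Walk.length_append] at h₃
  unfold AncIn
  omega

theorem SimpleGraph.IsTree.mem_support_of_ancIn (hT : T.IsTree) {p : T.Walk r y}
    (hp : p.length = T.dist r y) (hx : AncIn T r x y) : x ∈ p.support := by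
  obtain ⟨q₁, hq₁⟩ := hT.connected.exists_walk_length_eq_dist r x
  obtain ⟨q₂, hq₂⟩ := hT.connected.exists_walk_length_eq_dist x y
  have hq : (q₁.append q₂).length = T.dist r y := by
    rw [Walk.length_append, hq₁, hq₂]
    exact hx
  have hqp : q₁.append q₂ = p := (hT.existsUnique_path r y).unique
    (Walk.isPath_of_length_eq_dist _ hq) (Walk.isPath_of_length_eq_dist _ hp)
  rw [← hqp, Walk.mem_support_append_iff]
  exact Or.inl q₁.end_mem_support

theorem AncIn.total_of_isTree (hT : T.IsTree) (hx : AncIn T r x z) (hy : AncIn T r y z) :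
    AncIn T r x y ∨ AncIn T r y x := by
  classical
  obtain ⟨p, hp⟩ := hT.connected.exists_walk_length_eq_dist r z
  have hyp := hT.mem_support_of_ancIn hp hy
  have hxp := hT.mem_support_of_ancIn hp hx
  rw [← p.take_spec hyp, Walk.mem_support_append_iff] at hxp
  rcases hxp with hx_above | hx_below
  · exact Or.inl (ancIn_of_mem_support
      (length_eq_dist_of_subwalk hp (p.isSubwalk_takeUntil hyp)) hx_above)
  · have hyxz := ancIn_of_mem_support
      (length_eq_dist_of_subwalk hp (p.isSubwalk_dropUntil hyp)) hx_below
    unfold AncIn at *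
    omega

theorem exists_mem_forall_ancIn (hT : T.IsTree) {A : Set V} (hA : A.Finite)
    (hne : A.Nonempty) (hanc : ∀ a ∈ A, AncIn T r a z) : ∃ a₀ ∈ A, ∀ a ∈ A, AncIn T r a₀ a := by
  obtain ⟨a₀, ha₀, hmin⟩ := Set.exists_min_image A (T.dist r) hA hne
  refine ⟨a₀, ha₀, fun a ha => ?_⟩
  rcases (hanc a₀ ha₀).total_of_isTree hT (hanc a ha) with h | h
  · exact h
  · have hdist : T.dist a a₀ = 0 := by
      have := hmin a ha
      unfold AncIn at h
      omega
    rw [hT.connected.dist_eq_zero_iff] at hdist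
    exact hdist ▸ h

end AncIn

theorem SimpleGraph.Walk.exists_mem_support_apply_eq {H : SimpleGraph V} (f : V → ℕ)
    (hf : ∀ a b, H.Adj a b → f b ≤ f a + 1) {u v : V} (p : H.Walk u v) {n : ℕ}
    (hu : f u ≤ n) (hv : n ≤ f v) : ∃ z ∈ p.support, f z = n := by
  induction p with
  | nil => exact ⟨_, Walk.start_mem_support _, by omega⟩
  | @cons u w _ h p ih =>
    by_cases hn : f u = n
    · exact ⟨u, Walk.start_mem_support _, hn⟩
    · obtain ⟨z, hz, hzn⟩ := ih (by have := hf u w h; omega) hv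
      exact ⟨z, Walk.support_cons h p ▸ List.mem_cons_of_mem _ hz, hzn⟩

/- The tree is a spanning tree of a path through all vertices, rooted at an end. It is the path
itself, but all that is needed is that its walks change the index by at most one per step. -/
theorem exists_isTree_ancIn_total [Finite V] [Nonempty V] :
    ∃ (T : SimpleGraph V) (r : V), T.IsTree ∧ ∀ x y, AncIn T r x y ∨ AncIn T r y x := by
  classical
  obtain ⟨n, ⟨e⟩⟩ := Finite.exists_equiv_fin V
  have hn : 0 < n := (e (Classical.arbitrary V)).pos
  have hP : ((pathGraph n).comap e).Connected :=
    ⟨(Iso.comap e _).preconnected_iff.mpr (pathGraph_preconnected n)⟩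
  obtain ⟨T, hTP, hT⟩ := hP.exists_isTree_le
  set r := e.symm ⟨0, hn⟩
  have hstep : ∀ a b, T.Adj a b → (e b : ℕ) ≤ e a + 1 := fun a b h => by
    have : (pathGraph n).Adj (e a) (e b) := hTP h
    rw [pathGraph_adj] at this
    omega
  have hanc : ∀ x y, (e x : ℕ) ≤ e y → AncIn T r x y := by
    intro x y hxy
    obtain ⟨p, hp⟩ := hT.connected.exists_walk_length_eq_dist r y
    obtain ⟨z, hz, hzx⟩ :=
      p.exists_mem_support_apply_eq (fun a => (e a : ℕ)) hstep (by simp [r]) hxy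
    rw [e.injective (Fin.ext hzx)] at hz
    exact ancIn_of_mem_support hp hz
  refine ⟨T, r, hT, fun x y => ?_⟩
  rcases le_total (e x : ℕ) (e y) with h | h
  exacts [Or.inl (hanc x y h), Or.inr (hanc y x h)]

namespace TreeLayout

variable {G : SimpleGraph V}

instance [Finite V] [Nonempty V] : Nonempty (TreeLayout G) :=
  let ⟨T, r, hT, htotal⟩ := exists_isTree_ancIn_total (V := V)
  ⟨⟨T, hT, r, fun x y _ => htotal x y⟩⟩

variable (L : TreeLayout G) {k : ℕ}

theorem ncard_strictAnc_adj_desc_le [Finite V]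
    (hk : ∀ x, (prunedSubtree L x).ncard ≤ k + 1) (u : V) :
    {a : V | L.StrictAnc a u ∧ ∃ d : V, L.Anc u d ∧ G.Adj a d}.ncard ≤ k := by
  set A := {a : V | L.StrictAnc a u ∧ ∃ d : V, L.Anc u d ∧ G.Adj a d}
  rcases A.eq_empty_or_nonempty with hA | hne
  · simp [hA]
  obtain ⟨a₀, ha₀, htop⟩ :=
    exists_mem_forall_ancIn L.isTree A.toFinite hne fun a ha => ha.1.1
  obtain ⟨⟨ha₀u, -⟩, d₀, hud₀, had₀⟩ := ha₀
  have hsub : insert u A ⊆ prunedSubtree L a₀ := by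
    rintro x (rfl | hx)
    · exact ⟨ha₀u, d₀, hud₀, had₀⟩
    · exact ⟨htop x hx, d₀, hx.1.1.trans L.isTree.connected hud₀, had₀⟩
  have hu : u ∉ A := fun h => h.1.2 rfl
  have := (Set.ncard_insert_of_notMem hu A.toFinite).symm.trans_le
    ((Set.ncard_le_ncard hsub (Set.toFinite _)).trans (hk a₀))
  omega

theorem ncard_adj_desc_le [Finite V] (hk : ∀ x, (prunedSubtree L x).ncard ≤ k + 1) (v : V) :
    {w : V | G.Adj v w ∧ L.Anc v w}.ncard ≤ k := by
  set D := {w : V | G.Adj v w ∧ L.Anc v w}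
  rcases D.eq_empty_or_nonempty with hD | ⟨w₀, hw₀⟩
  · simp [hD]
  have hv : v ∈ prunedSubtree L v := ⟨ancIn_refl _ _ _, w₀, hw₀.2, hw₀.1⟩
  have hsub : D ⊆ prunedSubtree L v \ {v} :=
    fun w hw => ⟨⟨hw.2, w, ancIn_refl _ _ _, hw.1⟩, hw.1.ne'⟩
  have := Set.ncard_le_ncard hsub (Set.toFinite _)
  rw [Set.ncard_sdiff_singleton_of_mem hv] at this
  have := hk v
  omega

theorem treewidthTL_le [Finite V] (hk : ∀ x, (prunedSubtree L x).ncard ≤ k + 1) :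
    treewidthTL G ≤ k :=
  Nat.sInf_le ⟨L, L.ncard_strictAnc_adj_desc_le hk⟩

theorem maxDegree_le [Fintype V] [DecidableRel G.Adj]
    (hk : ∀ x, (prunedSubtree L x).ncard ≤ k + 1) : G.maxDegree ≤ 2 * k := by
  refine G.maxDegree_le_of_forall_degree_le _ fun v => ?_
  set D := {w : V | G.Adj v w ∧ L.Anc v w}
  set A := {a : V | L.StrictAnc a v ∧ ∃ d : V, L.Anc v d ∧ G.Adj a d}
  have hsplit : G.neighborSet v ⊆ D ∪ A := by
    intro w hw
    rcases L.layout hw with h | h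
    · exact Or.inl ⟨hw, h⟩
    · exact Or.inr ⟨⟨h, hw.ne'⟩, v, ancIn_refl _ _ _, hw.symm⟩
  have hD : D.ncard ≤ k := L.ncard_adj_desc_le hk v
  have hA : A.ncard ≤ k := L.ncard_strictAnc_adj_desc_le hk v
  calc G.degree v = (G.neighborSet v).ncard := by
        rw [← card_neighborSet_eq_degree, Set.ncard_eq_toFinset_card', Set.toFinset_card]
    _ ≤ (D ∪ A).ncard := Set.ncard_le_ncard hsplit (Set.toFinite _)
    _ ≤ D.ncard + A.ncard := Set.ncard_union_le _ _
    _ ≤ 2 * k := by omega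

end TreeLayout

theorem exists_treeLayout_prunedSubtree_le_treespan [Finite V] [Nonempty V]
    (G : SimpleGraph V) :
    ∃ L : TreeLayout G, ∀ x, (prunedSubtree L x).ncard ≤ treespan G + 1 :=
  Nat.sInf_mem (s := {k | ∃ L : TreeLayout G, ∀ x, (prunedSubtree L x).ncard ≤ k + 1})
    ⟨Nat.card V, Classical.arbitrary _, fun _ => (Set.ncard_le_card _).trans (Nat.le_succ _)⟩

end TreeLayoutBounds

/-- treespan is at least `max(tw(G), Δ(G)/2)`. -/
theorem treewidth_le_treespan_and_maxDegree_le_two_treespan {V : Type*} [Fintype V]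
    (G : SimpleGraph V) [DecidableRel G.Adj] :
    treewidthTL G ≤ treespan G ∧ G.maxDegree ≤ 2 * treespan G := by
  cases isEmpty_or_nonempty V
  · have htw : treewidthTL G = 0 := Nat.sInf_eq_zero.mpr <| Or.inr <|
      Set.eq_empty_of_forall_notMem fun _ ⟨L, _⟩ => isEmptyElim L.root
    have hΔ : G.maxDegree = 0 :=
      Nat.le_zero.mp (G.maxDegree_le_of_forall_degree_le 0 fun v => isEmptyElim v)
    exact ⟨htw.trans_le (Nat.zero_le _), hΔ.trans_le (Nat.zero_le _)⟩
  · obtain ⟨L, hL⟩ := exists_treeLayout_prunedSubtree_le_treespan G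
    exact ⟨L.treewidthTL_le hL, L.maxDegree_le hL⟩
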